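/- In the LCU setup above, the probability of measuring the ancilla register in the state |b₁⟩ (i.e., the squared norm of the component of PREP†·SELECT·PREP(|b₁⟩⊗ψ) along |b₁⟩ in the ancilla) equals ‖(1/Ω) Σⱼ αⱼ Uⱼ ψ‖². -/
import Mathlib


/-- Correctness of the Linear Combination of Unitaries (LCU) method.  We model the joint
ancilla-plus-target space `ℂ^K ⊗ H` as `Fin K → H` (the ancilla-components of the joint state),
so that `|b₁⟩ ⊗ ψ` is the family supported at index `0` with value `ψ`, `PREP ⊗ I` acts by the
matrix `PREP` on components, `SELECT` applies `U_j` to the `j`-th component for `j < N` (identity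
otherwise), and contracting against `⟨b₁|` extracts the component at index `0`.
The probability of measuring the ancilla in `|b₁⟩`, i.e. the squared norm of the component of the final joint state along `|b₁⟩`, equals `‖(1/Ω) Σⱼ αⱼ Uⱼ ψ‖²`. -/
theorem lcu_success_probability
    {H : Type*} [NormedAddCommGroup H] [InnerProductSpace ℂ H] [FiniteDimensional ℂ H]
    {K N : ℕ} (hN : 1 ≤ N) (hNK : N ≤ K)
    (α : Fin N → ℝ) (hα : ∀ j, 0 ≤ α j) (hΩ : 0 < ∑ j, α j)
    (U : Fin N → (H ≃ₗᵢ[ℂ] H))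
    (PREP : Matrix (Fin K) (Fin K) ℂ) (hPREP : PREP ∈ Matrix.unitaryGroup (Fin K) ℂ)
    (hcol : ∀ j : Fin K, PREP j ⟨0, by omega⟩ =
      if h : (j : ℕ) < N then
        ((Real.sqrt (α ⟨j, h⟩) / Real.sqrt (∑ i, α i) : ℝ) : ℂ) else 0)
    (ψ : H) (hψ : ‖ψ‖ = 1) :
    ‖∑ k : Fin K,
        (starRingEnd ℂ) (PREP k ⟨0, by omega⟩) •
          (if h : (k : ℕ) < N then U ⟨k, h⟩ (PREP k ⟨0, by omega⟩ • ψ)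
           else PREP k ⟨0, by omega⟩ • ψ)‖ ^ 2 =
      ‖(((∑ j, α j : ℝ) : ℂ))⁻¹ • ∑ j : Fin N, ((α j : ℝ) : ℂ) • U j ψ‖ ^ 2 := by
  set Ω : ℝ := ∑ j, α j with hΩdef
  have hΩ0 : Ω ≠ 0 := ne_of_gt hΩ
  set g : ℕ → H := fun i =>
    if h : i < N then (((α ⟨i, h⟩ / Ω : ℝ) : ℂ)) • U ⟨i, h⟩ ψ else 0 with hg
  congr 2
  have key : ∀ k : Fin K,
      (starRingEnd ℂ) (PREP k ⟨0, by omega⟩) •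
        (if h : (k : ℕ) < N then U ⟨k, h⟩ (PREP k ⟨0, by omega⟩ • ψ)
         else PREP k ⟨0, by omega⟩ • ψ) = g (k : ℕ) := by
    intro k
    rw [hcol]
    by_cases h : (k : ℕ) < N
    · simp only [hg, dif_pos h, map_smul, Complex.conj_ofReal, smul_smul]
      congr 1
      rw [← Complex.ofReal_mul]
      congr 1
      rw [div_mul_div_comm, Real.mul_self_sqrt (hα _), Real.mul_self_sqrt hΩ.le]
    · simp [hg, dif_neg h]
  calc ∑ k : Fin K,
        (starRingEnd ℂ) (PREP k ⟨0, by omega⟩) •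
          (if h : (k : ℕ) < N then U ⟨k, h⟩ (PREP k ⟨0, by omega⟩ • ψ)
           else PREP k ⟨0, by omega⟩ • ψ)
      = ∑ k : Fin K, g (k : ℕ) := Finset.sum_congr rfl (fun k _ => key k)
    _ = ∑ i ∈ Finset.range K, g i := Fin.sum_univ_eq_sum_range g K
    _ = ∑ i ∈ Finset.range N, g i := by
        refine (Finset.sum_subset (Finset.range_subset_range.2 hNK) ?_).symm
        intro i _ hi
        simp only [Finset.mem_range] at hi
        simp [hg, dif_neg hi]
    _ = ∑ j : Fin N, g (j : ℕ) := (Fin.sum_univ_eq_sum_range g N).symm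
    _ = (((Ω : ℝ) : ℂ))⁻¹ • ∑ j : Fin N, ((α j : ℝ) : ℂ) • U j ψ := by
        rw [Finset.smul_sum]
        refine Finset.sum_congr rfl fun j _ => ?_
        simp only [hg, dif_pos j.isLt, Fin.eta, smul_smul]
        congr 1
        rw [Complex.ofReal_div]
        field_simp
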